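/- arXiv:2111.09179 — 5 statements merged into one kernel-verified Lean document; each statement's English description precedes it below -/
import Mathlib

section
/- If there exist weights λ_{(c,c',k)} ≥ 0 for c, c' ∈ C, k ∈ [n] with Σ_{c',k} λ_{(c,c',k)} = 1 for every c ∈ C, satisfying (1) Σ_{c',k} F_{k,j} λ_{(c',c,k)} ≥ F_{x(c),j} for all c ∈ C, j ∈ [m], and (2) Σ_{c,c',k} λ_{(c,c',k)} γ_k c < Σ_c γ_{x(c)} c, then the allocation rule x is not implementable (no non-negative payment rule makes (x,·) IC). -/
/-- If a deviation plan with weakly dominant distributions and strictly lower joint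
cost exists, the allocation rule is not implementable. -/
theorem deviation_plan_implies_not_implementable
    (n m : ℕ) (γ : Fin (n + 1) → ℝ) (F : Fin (n + 1) → Fin (m + 1) → ℝ)
    (C : Finset ℝ) (x : ℝ → Fin (n + 1))
    (lam : ℝ → ℝ → Fin (n + 1) → ℝ)
    (hnonneg : ∀ c ∈ C, ∀ c' ∈ C, ∀ k, 0 ≤ lam c c' k)
    (hnorm : ∀ c ∈ C, ∑ c' ∈ C, ∑ k, lam c c' k = 1)
    (hdom : ∀ c ∈ C, ∀ j : Fin (m + 1),
      ∑ c' ∈ C, ∑ k, F k j * lam c' c k ≥ F (x c) j)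
    (hcost : ∑ c ∈ C, ∑ c' ∈ C, ∑ k, lam c c' k * γ k * c < ∑ c ∈ C, γ (x c) * c) :
    ¬ ∃ t : ℝ → Fin (m + 1) → ℝ,
      (∀ c ∈ C, ∀ j, 0 ≤ t c j) ∧
      (∀ c ∈ C, ∀ c' ∈ C, ∀ k : Fin (n + 1),
        (∑ j, F (x c) j * t c j) - γ (x c) * c ≥ (∑ j, F k j * t c' j) - γ k * c) := by
  rintro ⟨t, ht0, hIC⟩
  set A := ∑ c ∈ C, ∑ j, F (x c) j * t c j with hA
  set G := ∑ c ∈ C, γ (x c) * c with hG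
  set L := ∑ c ∈ C, ∑ c' ∈ C, ∑ k, lam c c' k * γ k * c with hL
  set S := ∑ c ∈ C, ∑ c' ∈ C, ∑ k, lam c c' k * (∑ j, F k j * t c' j) with hS
  -- Step 1: weighted IC
  have step1 : ∀ c ∈ C,
      ∑ c' ∈ C, ∑ k, lam c c' k * ((∑ j, F k j * t c' j) - γ k * c)
        ≤ (∑ j, F (x c) j * t c j) - γ (x c) * c := by
    intro c hc
    calc ∑ c' ∈ C, ∑ k, lam c c' k * ((∑ j, F k j * t c' j) - γ k * c)
        ≤ ∑ c' ∈ C, ∑ k, lam c c' k * ((∑ j, F (x c) j * t c j) - γ (x c) * c) := by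
          refine Finset.sum_le_sum fun c' hc' => Finset.sum_le_sum fun k _ => ?_
          exact mul_le_mul_of_nonneg_left (hIC c hc c' hc' k) (hnonneg c hc c' hc' k)
      _ = (∑ c' ∈ C, ∑ k, lam c c' k) * ((∑ j, F (x c) j * t c j) - γ (x c) * c) := by
          rw [Finset.sum_mul]
          exact Finset.sum_congr rfl fun c' _ => by rw [Finset.sum_mul]
      _ = (∑ j, F (x c) j * t c j) - γ (x c) * c := by rw [hnorm c hc, one_mul]
  -- Step 2: summing over c
  have main : S - L ≤ A - G := by
    have h1 : ∑ c ∈ C, ∑ c' ∈ C, ∑ k, lam c c' k * ((∑ j, F k j * t c' j) - γ k * c)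
        ≤ A - G := by
      rw [hA, hG, ← Finset.sum_sub_distrib]
      exact Finset.sum_le_sum step1
    have h2 : ∑ c ∈ C, ∑ c' ∈ C, ∑ k, lam c c' k * ((∑ j, F k j * t c' j) - γ k * c)
        = S - L := by
      rw [hS, hL, ← Finset.sum_sub_distrib]
      refine Finset.sum_congr rfl fun c _ => ?_
      rw [← Finset.sum_sub_distrib]
      refine Finset.sum_congr rfl fun c' _ => ?_
      rw [← Finset.sum_sub_distrib]
      exact Finset.sum_congr rfl fun k _ => by ring
    linarith
  -- Step 3: S ≥ A
  have hSA : A ≤ S := by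
    rw [hS, Finset.sum_comm, hA]
    refine Finset.sum_le_sum fun c' hc' => ?_
    have key : ∑ c ∈ C, ∑ k, lam c c' k * (∑ j, F k j * t c' j)
        = ∑ j, (∑ c ∈ C, ∑ k, F k j * lam c c' k) * t c' j := by
      calc ∑ c ∈ C, ∑ k, lam c c' k * (∑ j, F k j * t c' j)
          = ∑ c ∈ C, ∑ k, ∑ j, (F k j * lam c c' k) * t c' j := by
            refine Finset.sum_congr rfl fun c _ => Finset.sum_congr rfl fun k _ => ?_
            rw [Finset.mul_sum]
            exact Finset.sum_congr rfl fun j _ => by ring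
        _ = ∑ c ∈ C, ∑ j, ∑ k, (F k j * lam c c' k) * t c' j := by
            exact Finset.sum_congr rfl fun c _ => Finset.sum_comm
        _ = ∑ j, ∑ c ∈ C, ∑ k, (F k j * lam c c' k) * t c' j := Finset.sum_comm
        _ = ∑ j, (∑ c ∈ C, ∑ k, F k j * lam c c' k) * t c' j := by
            refine Finset.sum_congr rfl fun j _ => ?_
            rw [Finset.sum_mul]
            exact Finset.sum_congr rfl fun c _ => by rw [Finset.sum_mul]
    rw [key]
    refine Finset.sum_le_sum fun j _ => ?_
    exact mul_le_mul_of_nonneg_right (hdom c' hc' j) (ht0 c' hc' j)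
  linarith
end

section
/- If an allocation rule x is non-monotone (there exist types ℓ < h in C with γ_{x(ℓ)} < γ_{x(h)}), then the 'swap' deviation plan λ defined by λ_{(ℓ,h,x(h))} = λ_{(h,ℓ,x(ℓ))} = 1, λ_{(c,c,x(c))} = 1 for all other c, and zero otherwise, satisfies: (1) Σ_{c',k} F_{k,j} λ_{(c',c,k)} = F_{x(c),j} for all c ∈ C and j ∈ [m], and (2) Σ_{c,c',k} λ_{(c,c',k)} γ_k c < Σ_c γ_{x(c)} c. -/
open Classical in
/-- The swap deviation plan for a non-monotone rule preserves the outcome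
distributions and strictly lowers the joint cost. -/
theorem swap_deviation_plan
    (n m : ℕ) (γ : Fin (n + 1) → ℝ) (F : Fin (n + 1) → Fin (m + 1) → ℝ)
    (hF : ∀ i, ∑ j, F i j = 1)
    (C : Finset ℝ) (x : ℝ → Fin (n + 1))
    (ℓ h : ℝ) (hℓ : ℓ ∈ C) (hh : h ∈ C) (hlt : ℓ < h)
    (hnonmono : γ (x ℓ) < γ (x h))
    (lam : ℝ → ℝ → Fin (n + 1) → ℝ)
    (hlam : lam = fun c c' k =>
      if c = ℓ then (if c' = h ∧ k = x h then (1 : ℝ) else 0)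
      else if c = h then (if c' = ℓ ∧ k = x ℓ then (1 : ℝ) else 0)
      else (if c' = c ∧ k = x c then (1 : ℝ) else 0)) :
    (∀ c ∈ C, ∀ j : Fin (m + 1),
        ∑ c' ∈ C, ∑ k, F k j * lam c' c k = F (x c) j) ∧
    ∑ c ∈ C, ∑ c' ∈ C, ∑ k, lam c c' k * γ k * c < ∑ c ∈ C, γ (x c) * c := by
  have hne : ℓ ≠ h := ne_of_lt hlt
  subst hlam
  constructor
  · intro c hc j
    by_cases hcl : c = ℓ
    · rw [Finset.sum_eq_single_of_mem h hh]
      · simp [hcl, Ne.symm hne, mul_ite, Finset.sum_ite_eq']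
      · intro b hb hbh
        by_cases hbl : b = ℓ
        · simp [hbl, hcl, hne]
        · simp [hbl, hbh, hcl, Ne.symm hbl]
    · by_cases hch : c = h
      · rw [Finset.sum_eq_single_of_mem ℓ hℓ]
        · simp [hch, mul_ite, Finset.sum_ite_eq']
        · intro b hb hbl
          by_cases hbh : b = h
          · simp [hbh, hch, Ne.symm hne, hne]
          · simp [hbl, hbh, hch, Ne.symm hbh]
      · rw [Finset.sum_eq_single_of_mem c hc]
        · simp [hcl, hch, mul_ite, Finset.sum_ite_eq']
        · intro b hb hbc
          by_cases hbl : b = ℓ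
          · simp [hbl, hch]
          · by_cases hbh : b = h
            · simp [hbl, hbh, hcl, Ne.symm hne]
            · simp [hbl, hbh, Ne.symm hbc]
  · have key : ∀ c ∈ C, (∑ c' ∈ C, ∑ k, (if c = ℓ then (if c' = h ∧ k = x h then (1:ℝ) else 0)
        else if c = h then (if c' = ℓ ∧ k = x ℓ then (1:ℝ) else 0)
        else (if c' = c ∧ k = x c then (1:ℝ) else 0)) * γ k * c)
        = if c = ℓ then γ (x h) * ℓ else if c = h then γ (x ℓ) * h else γ (x c) * c := by
      intro c hc
      by_cases hcl : c = ℓ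
      · rw [Finset.sum_eq_single_of_mem h hh]
        · simp [hcl, hne, ite_mul, Finset.sum_ite_eq']
        · intro b hb hbh; simp [hcl, hbh]
      · by_cases hch : c = h
        · rw [Finset.sum_eq_single_of_mem ℓ hℓ]
          · simp [hch, hcl, Ne.symm hne, ite_mul, Finset.sum_ite_eq']
          · intro b hb hbl; simp [hch, hcl, hbl, Ne.symm hne]
        · rw [Finset.sum_eq_single_of_mem c hc]
          · simp [hcl, hch, ite_mul, Finset.sum_ite_eq']
          · intro b hb hbc; simp [hcl, hch, hbc]
    rw [Finset.sum_congr rfl key]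
    have hhm : h ∈ C.erase ℓ := Finset.mem_erase.mpr ⟨Ne.symm hne, hh⟩
    have expand : ∀ t : ℝ → ℝ, ∑ c ∈ C, t c = t ℓ + (t h + ∑ c ∈ (C.erase ℓ).erase h, t c) := by
      intro t
      rw [Finset.add_sum_erase _ t hhm, Finset.add_sum_erase _ t hℓ]
    rw [expand, expand (fun c => γ (x c) * c)]
    have heq : ∑ c ∈ (C.erase ℓ).erase h,
        (if c = ℓ then γ (x h) * ℓ else if c = h then γ (x ℓ) * h else γ (x c) * c)
        = ∑ c ∈ (C.erase ℓ).erase h, γ (x c) * c := by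
      apply Finset.sum_congr rfl
      intro b hb
      have h1 := (Finset.mem_erase.mp hb).1
      have h2 := (Finset.mem_erase.mp (Finset.mem_erase.mp hb).2).1
      simp [h1, h2]
    rw [heq]
    simp only [if_pos rfl, hne, Ne.symm hne, if_false, ite_true, ite_false, if_neg hne,
      if_neg (Ne.symm hne)]
    nlinarith [mul_pos (sub_pos.mpr hnonmono) (sub_pos.mpr hlt)]
end

section
/- In the instance with four actions with effort levels γ = (0,1,3,10), three nonzero outcomes with rewards (0,10,30), and outcome distributions F_0 = (1,0,0,0), F_1 putting mass 1 on the reward-10 outcome, F_2 putting mass 0.5 on reward 10 and 0.5 on reward 30, and F_3 putting mass 1 on reward 30, with two types c = 1 and c = 4, the monotone allocation rule x(1) = x(4) = 2 is not implementable: there is no payment rule t : {1,4} → ℝ^4_{≥0} such that for both types c ∈ {1,4}, T^c_2 − 3c ≥ T^{c'}_k − γ_k·c for all c' ∈ {1,4} and all actions k ∈ {0,1,2,3}. -/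
/-- In the running example, the monotone allocation rule assigning action 2 to
both types 1 and 4 is not implementable. -/
theorem running_example_not_implementable
    (γ : Fin 4 → ℝ) (hγ : γ = ![0, 1, 3, 10])
    (F : Fin 4 → Fin 4 → ℝ)
    (hF : F = ![![1, 0, 0, 0], ![0, 0, 1, 0], ![0, 0, 1/2, 1/2], ![0, 0, 0, 1]]) :
    ¬ ∃ t : ℝ → Fin 4 → ℝ,
      (∀ c ∈ ({1, 4} : Finset ℝ), ∀ j, 0 ≤ t c j) ∧
      (∀ c ∈ ({1, 4} : Finset ℝ), ∀ c' ∈ ({1, 4} : Finset ℝ), ∀ k : Fin 4,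
        (∑ j, F 2 j * t c j) - 3 * c ≥ (∑ j, F k j * t c' j) - γ k * c) := by
  rintro ⟨t, hpos, h⟩
  have m1 : (1 : ℝ) ∈ ({1, 4} : Finset ℝ) := by simp
  have m4 : (4 : ℝ) ∈ ({1, 4} : Finset ℝ) := by simp
  have h1 := h 1 m1 4 m4 3
  have h2 := h 4 m4 4 m4 1
  have h3 := h 4 m4 1 m1 2
  subst hγ hF
  simp [Fin.sum_univ_four] at h1 h2 h3
  linarith
end

section
/- If a feasible solution λ to the dual program D1 has strictly negative objective value Σ_{c,c',k} λ_{(c,c',k)}(γ_k − γ_{x(c)})c < 0, then there is a feasible solution λ' with strictly negative objective value that is additionally normalized: Σ_{c',k} λ'_{(c,c',k)} = 1 for every c ∈ C. -/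
/-- Normalization of a dual solution: a feasible solution of (D1) with strictly
negative objective can be replaced by a normalized feasible solution with
strictly negative objective. -/
theorem dual_solution_normalization
    (n m : ℕ) (γ : Fin (n + 1) → ℝ) (F : Fin (n + 1) → Fin (m + 1) → ℝ)
    (C : Finset ℝ) (x : ℝ → Fin (n + 1))
    (lam : ℝ → ℝ → Fin (n + 1) → ℝ)
    (hnonneg : ∀ c ∈ C, ∀ c' ∈ C, ∀ k, 0 ≤ lam c c' k)
    (hfeas : ∀ c ∈ C, ∀ j : Fin (m + 1),
      ∑ c' ∈ C, ∑ k, F k j * lam c' c k ≥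
        F (x c) j * (∑ c'' ∈ C, ∑ k, lam c c'' k))
    (hobj : ∑ c ∈ C, ∑ c' ∈ C, ∑ k, lam c c' k * (γ k - γ (x c)) * c < 0) :
    ∃ lam' : ℝ → ℝ → Fin (n + 1) → ℝ,
      (∀ c ∈ C, ∀ c' ∈ C, ∀ k, 0 ≤ lam' c c' k) ∧
      (∀ c ∈ C, ∑ c' ∈ C, ∑ k, lam' c c' k = 1) ∧
      (∀ c ∈ C, ∀ j : Fin (m + 1),
        ∑ c' ∈ C, ∑ k, F k j * lam' c' c k ≥
          F (x c) j * (∑ c'' ∈ C, ∑ k, lam' c c'' k)) ∧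
      ∑ c ∈ C, ∑ c' ∈ C, ∑ k, lam' c c' k * (γ k - γ (x c)) * c < 0 := by
  classical
  have hC : C.Nonempty := by
    rcases C.eq_empty_or_nonempty with h | h
    · simp [h] at hobj
    · exact h
  set S : ℝ → ℝ := fun c => ∑ c' ∈ C, ∑ k, lam c c' k with hSdef
  have hSnn : ∀ c ∈ C, 0 ≤ S c := fun c hc =>
    Finset.sum_nonneg fun c' hc' => Finset.sum_nonneg fun k _ => hnonneg c hc c' hc' k
  set M : ℝ := C.sup' hC S with hMdef
  have hSM : ∀ c ∈ C, S c ≤ M := fun c hc => Finset.le_sup' S hc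
  have hMpos : 0 < M := by
    by_contra h
    push_neg at h
    have hz : ∀ c ∈ C, ∀ c' ∈ C, ∀ k, lam c c' k = 0 := by
      intro c hc c' hc' k
      have hS0 : S c = 0 := le_antisymm (le_trans (hSM c hc) h) (hSnn c hc)
      have h1 := (Finset.sum_eq_zero_iff_of_nonneg
        (fun c' hc' => Finset.sum_nonneg fun k _ => hnonneg c hc c' hc' k)).mp hS0 c' hc'
      exact (Finset.sum_eq_zero_iff_of_nonneg
        (fun k _ => hnonneg c hc c' hc' k)).mp h1 k (Finset.mem_univ k)
    have h0 : ∑ c ∈ C, ∑ c' ∈ C, ∑ k, lam c c' k * (γ k - γ (x c)) * c = 0 := by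
      refine Finset.sum_eq_zero fun c hc => Finset.sum_eq_zero fun c' hc' =>
        Finset.sum_eq_zero fun k _ => ?_
      simp [hz c hc c' hc' k]
    linarith
  have hMne : M ≠ 0 := ne_of_gt hMpos
  refine ⟨fun c c' k => lam c c' k / M + if c' = c ∧ k = x c then 1 - S c / M else 0,
    ?_, ?_, ?_, ?_⟩
  · intro c hc c' hc' k
    have h1 : 0 ≤ lam c c' k / M := div_nonneg (hnonneg c hc c' hc' k) hMpos.le
    have h2 : (0:ℝ) ≤ if c' = c ∧ k = x c then 1 - S c / M else 0 := by
      split_ifs with h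
      · have := (div_le_one hMpos).mpr (hSM c hc)
        linarith
      · exact le_refl 0
    linarith
  · intro c hc
    have hrow : ∀ c'' : ℝ,
        (∑ k, (lam c c'' k / M + if c'' = c ∧ k = x c then 1 - S c / M else 0))
        = (∑ k, lam c c'' k) / M + (if c'' = c then 1 - S c / M else 0) := by
      intro c''
      have h1 : (∑ k : Fin (n + 1), lam c c'' k / M) = (∑ k, lam c c'' k) / M :=
        (Finset.sum_div _ _ _).symm
      have h2 : (∑ k : Fin (n + 1), if c'' = c ∧ k = x c then 1 - S c / M else 0)
          = if c'' = c then 1 - S c / M else 0 := by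
        by_cases h : c'' = c
        · simp [h]
        · simp [h]
      rw [Finset.sum_add_distrib, h1, h2]
    calc ∑ c' ∈ C, ∑ k, (lam c c' k / M + if c' = c ∧ k = x c then 1 - S c / M else 0)
        = ∑ c' ∈ C, ((∑ k, lam c c' k) / M + (if c' = c then 1 - S c / M else 0)) := by
          exact Finset.sum_congr rfl fun c' _ => hrow c'
      _ = S c / M + (1 - S c / M) := by
          rw [Finset.sum_add_distrib, ← Finset.sum_div, Finset.sum_ite_eq' C c
            (fun _ => 1 - S c / M), if_pos hc]
      _ = 1 := by ring
  · intro c hc j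
    have hrow : ∀ c'' : ℝ,
        (∑ k, (lam c c'' k / M + if c'' = c ∧ k = x c then 1 - S c / M else 0))
        = (∑ k, lam c c'' k) / M + (if c'' = c then 1 - S c / M else 0) := by
      intro c''
      have h1 : (∑ k : Fin (n + 1), lam c c'' k / M) = (∑ k, lam c c'' k) / M :=
        (Finset.sum_div _ _ _).symm
      have h2 : (∑ k : Fin (n + 1), if c'' = c ∧ k = x c then 1 - S c / M else 0)
          = if c'' = c then 1 - S c / M else 0 := by
        by_cases h : c'' = c
        · simp [h]
        · simp [h]
      rw [Finset.sum_add_distrib, h1, h2]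
    have hrhs : (∑ c'' ∈ C, ∑ k,
        (lam c c'' k / M + if c'' = c ∧ k = x c then 1 - S c / M else 0)) = 1 := by
      calc ∑ c' ∈ C, ∑ k, (lam c c' k / M + if c' = c ∧ k = x c then 1 - S c / M else 0)
          = ∑ c' ∈ C, ((∑ k, lam c c' k) / M + (if c' = c then 1 - S c / M else 0)) :=
            Finset.sum_congr rfl fun c' _ => hrow c'
        _ = S c / M + (1 - S c / M) := by
            rw [Finset.sum_add_distrib, ← Finset.sum_div, Finset.sum_ite_eq' C c
              (fun _ => 1 - S c / M), if_pos hc]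
        _ = 1 := by ring
    rw [hrhs, mul_one]
    have hlhs : (∑ c' ∈ C, ∑ k, F k j *
        (lam c' c k / M + if c = c' ∧ k = x c' then 1 - S c' / M else 0))
        = (∑ c' ∈ C, ∑ k, F k j * lam c' c k) / M + F (x c) j * (1 - S c / M) := by
      have hterm : ∀ c' : ℝ,
          (∑ k, F k j * (lam c' c k / M + if c = c' ∧ k = x c' then 1 - S c' / M else 0))
          = (∑ k, F k j * lam c' c k) / M
            + (if c = c' then F (x c') j * (1 - S c' / M) else 0) := by
        intro c'
        rw [show (∑ k, F k j * (lam c' c k / M + if c = c' ∧ k = x c' then 1 - S c' / M else 0))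
            = ∑ k, (F k j * lam c' c k / M
              + F k j * (if c = c' ∧ k = x c' then 1 - S c' / M else 0)) from
          Finset.sum_congr rfl fun k _ => by ring,
          Finset.sum_add_distrib, ← Finset.sum_div]
        congr 1
        by_cases h : c = c'
        · subst h
          simp
        · simp [h]
      calc (∑ c' ∈ C, ∑ k, F k j *
            (lam c' c k / M + if c = c' ∧ k = x c' then 1 - S c' / M else 0))
          = ∑ c' ∈ C, ((∑ k, F k j * lam c' c k) / M
            + (if c = c' then F (x c') j * (1 - S c' / M) else 0)) :=
            Finset.sum_congr rfl fun c' _ => hterm c'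
        _ = (∑ c' ∈ C, ∑ k, F k j * lam c' c k) / M + F (x c) j * (1 - S c / M) := by
            rw [Finset.sum_add_distrib, ← Finset.sum_div, Finset.sum_ite_eq C c
              (fun c' => F (x c') j * (1 - S c' / M)), if_pos hc]
    rw [hlhs]
    have hf := hfeas c hc j
    have hdiv : F (x c) j * S c / M ≤ (∑ c' ∈ C, ∑ k, F k j * lam c' c k) / M :=
      (div_le_div_iff_of_pos_right hMpos).mpr hf
    have hexp : F (x c) j * (1 - S c / M) = F (x c) j - F (x c) j * S c / M := by ring
    linarith
  · have hterm : ∀ c' c : ℝ,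
        (∑ k, (lam c c' k / M + if c' = c ∧ k = x c then 1 - S c / M else 0)
          * (γ k - γ (x c)) * c)
        = (∑ k, lam c c' k * (γ k - γ (x c)) * c) / M := by
      intro c' c
      have hsplit : ∀ k : Fin (n + 1),
          ((lam c c' k / M + if c' = c ∧ k = x c then 1 - S c / M else 0)
            * (γ k - γ (x c)) * c)
          = lam c c' k * (γ k - γ (x c)) * c / M
            + (if c' = c ∧ k = x c then (1 - S c / M) * (γ k - γ (x c)) * c else 0) := by
        intro k; split_ifs <;> ring
      rw [Finset.sum_congr rfl fun k _ => hsplit k, Finset.sum_add_distrib,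
        ← Finset.sum_div]
      have h0 : (∑ k : Fin (n + 1),
          if c' = c ∧ k = x c then (1 - S c / M) * (γ k - γ (x c)) * c else 0) = 0 := by
        refine Finset.sum_eq_zero fun k _ => ?_
        split_ifs with h
        · rcases h with ⟨h1, h2⟩
          subst h2
          ring
        · rfl
      rw [h0, add_zero]
    calc ∑ c ∈ C, ∑ c' ∈ C, ∑ k,
          (lam c c' k / M + if c' = c ∧ k = x c then 1 - S c / M else 0)
            * (γ k - γ (x c)) * c
        = ∑ c ∈ C, ∑ c' ∈ C, (∑ k, lam c c' k * (γ k - γ (x c)) * c) / M :=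
          Finset.sum_congr rfl fun c _ => Finset.sum_congr rfl fun c' _ => hterm c' c
      _ = (∑ c ∈ C, ∑ c' ∈ C, ∑ k, lam c c' k * (γ k - γ (x c)) * c) / M := by
          rw [Finset.sum_div]
          exact Finset.sum_congr rfl fun c _ => (Finset.sum_div _ _ _).symm
      _ < 0 := div_neg_of_neg_of_pos hobj hMpos
end

section
/- For the exponential-type example, lower joint cost does not imply lower joint virtual cost: with efforts γ_0 = 0, γ_1 = 1, γ_2 = 2, γ_3 = 3, γ_4 = 7, types c_1 = 1, c_2 = 2, and virtual cost φ(c) = c + e^c − 1 (exponential distribution with rate 1): the allocation (x(1), x(2)) = (2, 3) has joint cost γ_3·2 + γ_2·1 = 8 which is strictly less than the joint cost γ_1·2 + γ_4·1 = 9 of (x'(1), x'(2)) = (4, 1); yet its joint virtual cost γ_3·φ(2) + γ_2·φ(1) = 3(1 + e²) + 2e is strictly greater than γ_1·φ(2) + γ_4·φ(1) = (1 + e²) + 7e. -/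
open Real

/-- `2x² - 5x + 2 = (2x - 1)(x - 2)`. -/
lemma two_mul_sq_sub_five_mul_add_two_pos {x : ℝ} (hx : 2 < x) : 0 < 2 * x ^ 2 - 5 * x + 2 := by
  nlinarith

lemma one_add_exp_two_add_seven_mul_exp_one_lt :
    1 + exp 2 + 7 * exp 1 < 3 * (1 + exp 2) + 2 * exp 1 := by
  have hsq : exp 2 = exp 1 ^ 2 := by rw [← exp_nat_mul]; norm_num
  have := two_mul_sq_sub_five_mul_add_two_pos (lt_trans (by norm_num) exp_one_gt_d9)
  rw [hsq]
  linarith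

/-- For the exponential distribution, lower joint cost does not imply lower
joint virtual cost: a concrete counterexample. -/
theorem exponential_counterexample
    (γ : Fin 5 → ℝ) (hγ : γ = ![0, 1, 2, 3, 7])
    (φ : ℝ → ℝ) (hφ : ∀ c, φ c = c + Real.exp c - 1) :
    γ 3 * 2 + γ 2 * 1 = 8 ∧
    γ 1 * 2 + γ 4 * 1 = 9 ∧
    γ 3 * 2 + γ 2 * 1 < γ 1 * 2 + γ 4 * 1 ∧
    γ 3 * φ 2 + γ 2 * φ 1 = 3 * (1 + Real.exp 2) + 2 * Real.exp 1 ∧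
    γ 1 * φ 2 + γ 4 * φ 1 = (1 + Real.exp 2) + 7 * Real.exp 1 ∧
    γ 1 * φ 2 + γ 4 * φ 1 < γ 3 * φ 2 + γ 2 * φ 1 := by
  obtain ⟨h1, h2, h3, h4⟩ : γ 1 = 1 ∧ γ 2 = 2 ∧ γ 3 = 3 ∧ γ 4 = 7 := by
    subst hγ
    exact ⟨rfl, rfl, rfl, rfl⟩
  have hcost : ∀ a b : ℝ, a * φ 2 + b * φ 1 = a * (1 + exp 2) + b * exp 1 := by
    intro a b
    rw [hφ, hφ]
    ring
  rw [hcost, hcost, h1, h2, h3, h4]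
  refine ⟨by norm_num, by norm_num, by norm_num, rfl, by ring, ?_⟩
  simpa only [one_mul] using one_add_exp_two_add_seven_mul_exp_one_lt
end
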